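/- Let G be a connected simple graph on Fin k (k ≥ 2) with maximum degree Δ ≥ 1, and let P : Fin k → ℝ be a probability vector with P i > 0 for all i and ∑ i, P i = 1. Define the k×k real symmetric matrix B_G(P) by B_G(P)_ii = (1/Δ) · ( ∑_{j ∈ N_G(i)} (P j − P i)/(P i + P j) + (deg_G(i) − Δ) ), B_G(P)_ij = −2√(P i · P j)/(Δ (P i + P j)) whenever {i,j} is an edge of G, and B_G(P)_ij = 0 otherwise. Then B_G(P) · v(P) = −v(P) where v(P)_i = √(P i), −1 is the smallest eigenvalue of B_G(P), and every x ∈ ℝ^k with B_G(P) · x = −x is a scalar multiple of v(P). -/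

import Mathlib

/-!
Put `W i j = 2 / (P i + P j)` on the edges of `G` and `u = √P`. Then `Δ (B + 1)` is the
Laplacian of `W` twisted by `u`, whose quadratic form is `½ ∑ W i j (u j x i - u i x j)²`.
It is therefore positive semidefinite and kills `u`, which gives `B v = -v` and `μ ≥ -1`;
and its form vanishes only if `x / u` agrees at the ends of every edge, so on a connected
graph `x` is a multiple of `u`.
-/

open Matrix Finset

theorem SimpleGraph.Reachable.apply_eq_of_forall_adj {V α : Type*} {G : SimpleGraph V} {f : V → α}
    (hf : ∀ i j, G.Adj i j → f i = f j) {a b : V} (h : G.Reachable a b) : f a = f b := by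
  obtain ⟨w⟩ := h
  induction w with
  | nil => rfl
  | cons hadj _ ih => exact (hf _ _ hadj).trans ih

namespace Matrix

variable {V : Type*} [Fintype V]

theorem nonneg_of_mulVec_eq_smul {M : Matrix V V ℝ} (hM : ∀ y, 0 ≤ y ⬝ᵥ M *ᵥ y) {x : V → ℝ}
    (hx : x ≠ 0) {μ : ℝ} (h : M *ᵥ x = μ • x) : 0 ≤ μ := by
  have hxx : 0 < x ⬝ᵥ x := by
    simpa only [star_trivial] using dotProduct_star_self_pos_iff.mpr hx
  have := hM x
  rw [h, dotProduct_smul, smul_eq_mul] at this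
  exact nonneg_of_mul_nonneg_left this hxx

variable [DecidableEq V]

def twistedLaplacian (W : Matrix V V ℝ) (u : V → ℝ) : Matrix V V ℝ :=
  diagonal (W *ᵥ (u * u)) - diagonal u * W * diagonal u

variable (W : Matrix V V ℝ) (u : V → ℝ)

theorem twistedLaplacian_apply (i j : V) :
    twistedLaplacian W u i j =
      (if i = j then ∑ l, W i l * (u l * u l) else 0) - u i * W i j * u j := by
  simp [twistedLaplacian, diagonal_apply, mulVec, dotProduct]

theorem twistedLaplacian_mulVec_apply (x : V → ℝ) (i : V) :
    (twistedLaplacian W u *ᵥ x) i = ∑ j, W i j * u j * (u j * x i - u i * x j) := by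
  rw [mulVec, dotProduct]
  simp_rw [twistedLaplacian_apply, sub_mul, sum_sub_distrib, ite_mul, zero_mul, sum_ite_eq,
    if_pos (mem_univ _), sum_mul, ← sum_sub_distrib]
  exact sum_congr rfl fun j _ => by ring

theorem twistedLaplacian_mulVec_self : twistedLaplacian W u *ᵥ u = 0 := by
  ext i
  simp [twistedLaplacian_mulVec_apply, mul_comm]

variable {W}

theorem dotProduct_twistedLaplacian_mulVec (hW : W.IsSymm) (x : V → ℝ) :
    x ⬝ᵥ twistedLaplacian W u *ᵥ x = (∑ i, ∑ j, W i j * (u j * x i - u i * x j) ^ 2) / 2 := by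
  have hswap : x ⬝ᵥ twistedLaplacian W u *ᵥ x =
      ∑ i, ∑ j, -(W i j * u i * x j * (u j * x i - u i * x j)) := by
    simp only [dotProduct, twistedLaplacian_mulVec_apply, mul_sum]
    rw [sum_comm]
    refine sum_congr rfl fun i _ => sum_congr rfl fun j _ => ?_
    rw [hW.apply i j]
    ring
  rw [eq_div_iff two_ne_zero, mul_two]
  nth_rewrite 2 [hswap]
  simp only [dotProduct, twistedLaplacian_mulVec_apply, mul_sum, ← sum_add_distrib]
  exact sum_congr rfl fun i _ => sum_congr rfl fun j _ => by ring

theorem dotProduct_twistedLaplacian_mulVec_nonneg (hW : W.IsSymm) (hW₀ : ∀ i j, 0 ≤ W i j)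
    (x : V → ℝ) : 0 ≤ x ⬝ᵥ twistedLaplacian W u *ᵥ x := by
  rw [dotProduct_twistedLaplacian_mulVec u hW]
  exact div_nonneg (sum_nonneg fun i _ => sum_nonneg fun j _ =>
    mul_nonneg (hW₀ i j) (sq_nonneg _)) zero_le_two

theorem exists_eq_smul_of_twistedLaplacian_mulVec_eq_zero {G : SimpleGraph V}
    (hG : G.Connected) (hW : W.IsSymm) (hW₀ : ∀ i j, 0 ≤ W i j)
    (hWG : ∀ i j, G.Adj i j → 0 < W i j) (hu : ∀ i, u i ≠ 0) {x : V → ℝ}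
    (hx : twistedLaplacian W u *ᵥ x = 0) : ∃ c : ℝ, x = c • u := by
  have hsum : ∑ i, ∑ j, W i j * (u j * x i - u i * x j) ^ 2 = 0 := by
    have := dotProduct_twistedLaplacian_mulVec u hW x
    rwa [hx, dotProduct_zero, eq_comm, div_eq_zero_iff, or_iff_left two_ne_zero] at this
  have hnonneg i j : 0 ≤ W i j * (u j * x i - u i * x j) ^ 2 :=
    mul_nonneg (hW₀ i j) (sq_nonneg _)
  have hterm i j : W i j * (u j * x i - u i * x j) ^ 2 = 0 := by
    rw [sum_eq_zero_iff_of_nonneg fun i _ => sum_nonneg fun j _ => hnonneg i j] at hsum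
    exact (sum_eq_zero_iff_of_nonneg fun j _ => hnonneg i j).mp (hsum i (mem_univ i)) j (mem_univ j)
  have hratio : ∀ i j, G.Adj i j → x i / u i = x j / u j := fun i j hij => by
    have := (mul_eq_zero.mp (hterm i j)).resolve_left (hWG i j hij).ne'
    rw [div_eq_div_iff (hu i) (hu j)]
    linear_combination pow_eq_zero_iff two_ne_zero |>.mp this
  obtain ⟨i₀⟩ := hG.nonempty
  refine ⟨x i₀ / u i₀, funext fun j => ?_⟩
  rw [(hG i₀ j).apply_eq_of_forall_adj hratio, Pi.smul_apply, smul_eq_mul, div_mul_cancel₀ _ (hu j)]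

end Matrix

section Mixer

variable {V : Type*} (G : SimpleGraph V) [DecidableRel G.Adj] {P : V → ℝ}

noncomputable def mixerWeight (P : V → ℝ) : Matrix V V ℝ :=
  Matrix.of fun i j => if G.Adj i j then 2 / (P i + P j) else 0

theorem mixerWeight_isSymm : (mixerWeight G P).IsSymm := by
  ext i j
  simp only [mixerWeight, transpose_apply, of_apply, G.adj_comm, add_comm]

theorem mixerWeight_pos_of_adj (hP : ∀ i, 0 < P i) {i j : V} (h : G.Adj i j) :
    0 < mixerWeight G P i j := by
  simp only [mixerWeight, of_apply, if_pos h]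
  exact div_pos two_pos (add_pos (hP i) (hP j))

theorem mixerWeight_nonneg (hP : ∀ i, 0 < P i) (i j : V) : 0 ≤ mixerWeight G P i j := by
  by_cases h : G.Adj i j
  · exact (mixerWeight_pos_of_adj G hP h).le
  · simp [mixerWeight, h]

theorem eq_inv_smul_twistedLaplacian_mixerWeight_sub_one [Fintype V] [DecidableEq V]
    (hΔ : G.maxDegree ≠ 0) (hP : ∀ i, 0 < P i) (B : Matrix V V ℝ)
    (hB : ∀ i j, B i j =
      if i = j then
        (1 / (G.maxDegree : ℝ)) *
          ((∑ l ∈ G.neighborFinset i, (P l - P i) / (P i + P l))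
            + ((G.degree i : ℝ) - (G.maxDegree : ℝ)))
      else if G.Adj i j then
        -2 * Real.sqrt (P i * P j) / ((G.maxDegree : ℝ) * (P i + P j))
      else 0) :
    B = (G.maxDegree : ℝ)⁻¹ • twistedLaplacian (mixerWeight G P) (fun i => √(P i)) - 1 := by
  have hΔ₀ : (G.maxDegree : ℝ) ≠ 0 := by exact_mod_cast hΔ
  have hPP : ∀ i j, P i + P j ≠ 0 := fun i j => (add_pos (hP i) (hP j)).ne'
  ext i j
  rw [hB, Matrix.sub_apply, Matrix.smul_apply, smul_eq_mul, twistedLaplacian_apply, one_apply]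
  split_ifs with hij hadj
  · subst hij
    have hdiag : ∑ l, mixerWeight G P i l * (√(P l) * √(P l)) =
        ∑ l ∈ G.neighborFinset i, ((P l - P i) / (P i + P l) + 1) := by
      rw [G.neighborFinset_eq_filter, sum_filter]
      refine sum_congr rfl fun l _ => ?_
      simp only [mixerWeight, of_apply, Real.mul_self_sqrt (hP l).le]
      split_ifs
      · field_simp [hPP i l]; ring
      · ring
    rw [hdiag, sum_add_distrib, sum_const, G.card_neighborFinset_eq_degree, nsmul_one]
    simp only [mixerWeight, of_apply, G.irrefl, if_false]
    field_simp
    ring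
  · simp only [mixerWeight, of_apply, if_pos hadj, Real.sqrt_mul (hP i).le]
    field_simp
    ring
  · simp [mixerWeight, hadj]

end Mixer

theorem statement7 (k : ℕ)
    (G : SimpleGraph (Fin k)) [DecidableRel G.Adj]
    (hconn : G.Connected) (hΔ : 1 ≤ G.maxDegree)
    (P : Fin k → ℝ) (hpos : ∀ i, 0 < P i)
    (B : Matrix (Fin k) (Fin k) ℝ)
    (hB : ∀ i j, B i j =
      if i = j then
        (1 / (G.maxDegree : ℝ)) *
          ((∑ l ∈ G.neighborFinset i, (P l - P i) / (P i + P l))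
            + ((G.degree i : ℝ) - (G.maxDegree : ℝ)))
      else if G.Adj i j then
        -2 * Real.sqrt (P i * P j) / ((G.maxDegree : ℝ) * (P i + P j))
      else 0)
    (v : Fin k → ℝ) (hv : ∀ i, v i = Real.sqrt (P i)) :
    B.mulVec v = -v ∧
    (∀ μ : ℝ, ∀ x : Fin k → ℝ, x ≠ 0 → B.mulVec x = μ • x → -1 ≤ μ) ∧
    (∀ x : Fin k → ℝ, B.mulVec x = -x → ∃ c : ℝ, x = c • v) := by
  obtain rfl : v = fun i => √(P i) := funext hv
  have hBM := eq_inv_smul_twistedLaplacian_mixerWeight_sub_one G (by omega) hpos B hB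
  set M := twistedLaplacian (mixerWeight G P) fun i => √(P i) with hM_def
  have hΔ₀ : (0 : ℝ) < G.maxDegree := by exact_mod_cast hΔ
  have hM_eigen : ∀ μ x, B *ᵥ x = μ • x → M *ᵥ x = (G.maxDegree * (μ + 1) : ℝ) • x := by
    intro μ x h
    rw [hBM, sub_mulVec, one_mulVec, smul_mulVec, sub_eq_iff_eq_add, inv_smul_eq_iff₀ hΔ₀.ne'] at h
    rw [h]
    module
  have hM : ∀ y, 0 ≤ y ⬝ᵥ M *ᵥ y :=
    dotProduct_twistedLaplacian_mulVec_nonneg _ (mixerWeight_isSymm G)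
      (mixerWeight_nonneg G hpos)
  refine ⟨?_, fun μ x hx h => ?_, fun x h => ?_⟩
  · rw [hBM, sub_mulVec, smul_mulVec, hM_def, twistedLaplacian_mulVec_self, smul_zero,
      one_mulVec, zero_sub]
  · have := nonneg_of_mulVec_eq_smul hM hx (hM_eigen μ x h)
    linarith [nonneg_of_mul_nonneg_right this hΔ₀]
  · refine exists_eq_smul_of_twistedLaplacian_mulVec_eq_zero _ hconn (mixerWeight_isSymm G)
      (mixerWeight_nonneg G hpos) (fun _ _ => mixerWeight_pos_of_adj G hpos)
      (fun i => (Real.sqrt_pos.mpr (hpos i)).ne') ?_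
    have := hM_eigen (-1) x (by rw [h, neg_one_smul])
    rwa [neg_add_cancel, mul_zero, zero_smul] at this
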